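/- arXiv:1802.09856 — 4 statements merged into one kernel-verified Lean document; each statement's English description precedes it below -/
import Mathlib

section
/- The number of words of length n over the alphabet {1,2,...,m} consisting of exactly a_i occurrences of letter i (for i = 1,...,m) that avoid the pattern 12...k equals the number of such words that avoid the pattern k...21. (Here a word w contains a pattern x if there is a subsequence of w in the same relative order as x, including equalities.) -/
/-! Reversal of words is a bijection preserving the number of occurrences of each letter,
and a word contains `x` exactly when its reverse contains the reverse of `x`. -/

/-- Two lists of naturals are in the same relative order: equal length and
corresponding entries compare the same way (this also forces equalities to match). -/
def SameRelOrder (u v : List ℕ) : Prop :=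
  u.length = v.length ∧
    ∀ i j, i < u.length → j < u.length →
      (u.getD i 0 < u.getD j 0 ↔ v.getD i 0 < v.getD j 0)

/-- The word `w` contains the pattern `x`. -/
def WContains (w x : List ℕ) : Prop :=
  ∃ u : List ℕ, u.Sublist w ∧ SameRelOrder u x

/-- Number of words with exactly `a.getD i 0` letters `i+1` (letters are positive)
avoiding every pattern in `Ω`. -/
noncomputable def WordCount (a : List ℕ) (Ω : List (List ℕ)) : ℕ :=
  Nat.card {w : List ℕ // (∀ l ∈ w, 0 < l) ∧ (∀ i, w.count (i + 1) = a.getD i 0) ∧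
    ∀ x ∈ Ω, ¬ WContains w x}

/-- A Ferrers shape: row lengths (listed bottom to top) are non-increasing and positive. -/
def IsFerrers (lam : List ℕ) : Prop :=
  lam.Pairwise (· ≥ ·) ∧ ∀ t ∈ lam, 0 < t

/-- A 0-1-filling of the shape `lam` with one 1 per column, encoded as the function `f`
sending each column to the (0-based) row of its 1, contains the pattern `x`:
there are columns `c 0 < c 1 < ⋯` whose rows are in the same relative order as `x`
and such that the full submatrix on these rows and columns lies inside the shape. -/
def FContains (lam : List ℕ) {n : ℕ} (f : Fin n → ℕ) (x : List ℕ) : Prop :=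
  ∃ c : Fin x.length → Fin n, StrictMono c ∧
    (∀ j k : Fin x.length, (f (c j) < f (c k) ↔ x.get j < x.get k)) ∧
    (∀ j k : Fin x.length, ((c k : ℕ)) < lam.getD (f (c j)) 0)

/-- 0-1-fillings of the Ferrers shape `lam` with `n` columns, exactly one 1 in each column
(the 1 of column `c` lying in row `f c`, inside the shape), exactly `a.getD i 0` ones in
row `i`, avoiding all patterns in `Ω`. -/
def FillSet (n : ℕ) (lam a : List ℕ) (Ω : List (List ℕ)) : Set (Fin n → ℕ) :=
  {f | (∀ c : Fin n, (c : ℕ) < lam.getD (f c) 0) ∧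
       (∀ i, (Finset.univ.filter fun c => f c = i).card = a.getD i 0) ∧
       ∀ x ∈ Ω, ¬ FContains lam f x}

/-- The number of 0-1-fillings of `lam` (with `lam.getD 0 0` columns, i.e. one column for
each cell of the bottom row) with one 1 per column, `a.getD i 0` ones in row `i`, avoiding
all patterns in `Ω`. -/
noncomputable def FillingCount (lam a : List ℕ) (Ω : List (List ℕ)) : ℕ :=
  Nat.card (FillSet (lam.getD 0 0) lam a Ω)

/-- Two sets of patterns are shape-Wilf-equivalent for words. -/
def ShapeWilfEq (Ω Sig : List (List ℕ)) : Prop :=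
  ∀ lam a : List ℕ, IsFerrers lam → a.length = lam.length → (∀ t ∈ a, 0 < t) →
    FillingCount lam a Ω = FillingCount lam a Sig

lemma SameRelOrder.reverse {u v : List ℕ} (h : SameRelOrder u v) :
    SameRelOrder u.reverse v.reverse := by
  obtain ⟨hlen, hcmp⟩ := h
  refine ⟨by simp [hlen], fun i j hi hj => ?_⟩
  rw [List.length_reverse] at hi hj
  rw [List.getD_reverse i hi, List.getD_reverse j hj, List.getD_reverse i (hlen ▸ hi),
    List.getD_reverse j (hlen ▸ hj), hlen]
  exact hcmp _ _ (by omega) (by omega)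

lemma WContains.reverse {w x : List ℕ} (h : WContains w x) :
    WContains w.reverse x.reverse :=
  let ⟨u, hu, hrel⟩ := h
  ⟨u.reverse, hu.reverse, hrel.reverse⟩

lemma wContains_reverse_iff {w x : List ℕ} :
    WContains w.reverse x.reverse ↔ WContains w x :=
  ⟨fun h => by simpa using h.reverse, WContains.reverse⟩

theorem stmt_0_general (k : ℕ) (a : List ℕ) :
    WordCount a [(List.range k).map (· + 1)] =
      WordCount a [((List.range k).map (· + 1)).reverse] := by
  refine Nat.card_congr <|
    Equiv.subtypeEquiv (List.reverse_involutive.toPerm List.reverse) fun w => ?_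
  simp only [Function.Involutive.coe_toPerm, List.mem_reverse, List.count_reverse,
    List.mem_singleton, forall_eq, wContains_reverse_iff]

/-- The number of words with exactly `a.getD i 0` letters `i+1` avoiding the increasing
pattern `12⋯k` equals the number of such words avoiding the decreasing pattern `k⋯21`. -/
theorem stmt_0 (k : ℕ) (a : List ℕ) (ha : ∀ t ∈ a, 0 < t) :
    WordCount a [(List.range k).map (· + 1)] =
      WordCount a [((List.range k).map (· + 1)).reverse] :=
  stmt_0_general k a
end

section
/- Let R_1 be a 231-avoiding full rook placement on a Ferrers shape λ, and suppose that within a horizontal band of a_i consecutive rows the 1's of R_1 are arranged in increasing fashion (from bottom-left to top-right). Let u_0, u_1, ..., u_{a_i} denote the vertices along the right border of the band and let I_{R_1}(v) be the length of the longest increasing chain of 1's in the region weakly to the left and below of v. Then I_{R_1}(u_{j+1}) = I_{R_1}(u_j) + 1 for all j = 1, 2, ..., a_i - 1. -/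
/-- There is an increasing chain of `k` ones of the filling `f` in the region consisting
of the rows with index `< R` and the columns with index `< C`. -/
def IncChain {n : ℕ} (f : Fin n → ℕ) (R C k : ℕ) : Prop :=
  ∃ c : Fin k → Fin n, StrictMono c ∧ (∀ i, (c i : ℕ) < C ∧ f (c i) < R) ∧
    ∀ i j : Fin k, i < j → f (c i) < f (c j)

/-- `I(v)` for the vertex `v` on the right border at height `R` and horizontal position
`C`: the length of the longest increasing chain of ones weakly left and below of `v`. -/
noncomputable def Ival {n : ℕ} (f : Fin n → ℕ) (R C : ℕ) : ℕ :=
  sSup {k | IncChain f R C k}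

theorem List.Pairwise.antitone_getD {l : List ℕ} (h : l.Pairwise (· ≥ ·)) :
    Antitone fun r => l.getD r 0 := by
  intro r s hrs
  dsimp only
  rcases lt_or_ge s l.length with hs | hs
  · rw [List.getD_eq_getElem _ _ hs, List.getD_eq_getElem _ _ (hrs.trans_lt hs)]
    rcases hrs.lt_or_eq with hlt | rfl
    · exact List.pairwise_iff_getElem.mp h r s (hrs.trans_lt hs) hs hlt
    · rfl
  · rw [List.getD_eq_default _ _ hs]
    exact Nat.zero_le _

theorem Fin.strictMono_snoc {α : Type*} [Preorder α] {k : ℕ} {g : Fin k → α} {a : α}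
    (hg : StrictMono g) (ha : ∀ i, g i < a) : StrictMono (Fin.snoc g a : Fin (k + 1) → α) := by
  intro i j hij
  induction j using Fin.lastCases with
  | last =>
    induction i using Fin.lastCases with
    | last => exact absurd hij (lt_irrefl _)
    | cast i => simpa using ha i
  | cast j =>
    induction i using Fin.lastCases with
    | last => exact absurd hij (not_lt.mpr (Fin.le_last _))
    | cast i => simpa using hg (Fin.castSucc_lt_castSucc_iff.mp hij)

section IncreasingChains

variable {n : ℕ} {f : Fin n → ℕ} {R C k : ℕ}

theorem incChain_zero (f : Fin n → ℕ) (R C : ℕ) : IncChain f R C 0 :=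
  ⟨Fin.elim0, fun i => i.elim0, fun i => i.elim0, fun i => i.elim0⟩

theorem IncChain.le (h : IncChain f R C k) : k ≤ n := by
  obtain ⟨c, hc, -, -⟩ := h
  simpa using Fintype.card_le_of_injective c hc.injective

theorem bddAbove_incChain (f : Fin n → ℕ) (R C : ℕ) : BddAbove {k | IncChain f R C k} :=
  ⟨n, fun _ hk => IncChain.le hk⟩

theorem IncChain.le_Ival (h : IncChain f R C k) : k ≤ Ival f R C :=
  le_csSup (bddAbove_incChain f R C) h

theorem incChain_Ival (f : Fin n → ℕ) (R C : ℕ) : IncChain f R C (Ival f R C) :=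
  Nat.sSup_mem ⟨0, incChain_zero f R C⟩ (bddAbove_incChain f R C)

theorem IncChain.of_succ (h : IncChain f (R + 1) C (k + 1)) : IncChain f R C k := by
  obtain ⟨c, hc, hreg, hinc⟩ := h
  refine ⟨fun i => c i.castSucc, hc.comp Fin.strictMono_castSucc, fun i => ⟨(hreg _).1, ?_⟩,
    fun i j hij => hinc _ _ (Fin.castSucc_lt_castSucc_iff.mpr hij)⟩
  show f (c i.castSucc) < R
  have := hinc _ _ (Fin.castSucc_lt_last i)
  have := (hreg (Fin.last k)).2
  omega

theorem IncChain.snoc (h : IncChain f R C k) {c₀ : Fin n} (hc₀ : (c₀ : ℕ) < C) (hfc₀ : f c₀ = R)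
    (hleft : ∀ c : Fin n, f c < R → (c : ℕ) < C → c < c₀) : IncChain f (R + 1) C (k + 1) := by
  obtain ⟨c, hc, hreg, hinc⟩ := h
  refine ⟨Fin.snoc c c₀, Fin.strictMono_snoc hc fun i => hleft _ (hreg i).2 (hreg i).1, ?_, ?_⟩
  · intro i
    induction i using Fin.lastCases with
    | last => simpa [hfc₀] using hc₀
    | cast i =>
      simp only [Fin.snoc_castSucc]
      exact ⟨(hreg i).1, by have := (hreg i).2; omega⟩
  · have : StrictMono (Fin.snoc (f ∘ c) (f c₀) : Fin (k + 1) → ℕ) :=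
      Fin.strictMono_snoc (fun i j hij => hinc i j hij) fun i => hfc₀ ▸ (hreg i).2
    intro i j hij
    rw [← Fin.comp_snoc] at this
    exact this hij

theorem Ival_succ_le (f : Fin n → ℕ) (R C : ℕ) : Ival f (R + 1) C ≤ Ival f R C + 1 := by
  obtain ⟨m, hm⟩ : ∃ m, Ival f (R + 1) C = m := ⟨_, rfl⟩
  have h := incChain_Ival f (R + 1) C
  rw [hm] at h ⊢
  cases m with
  | zero => omega
  | succ m => simpa using h.of_succ.le_Ival

theorem Ival_succ_eq {c₀ : Fin n} (hc₀ : (c₀ : ℕ) < C) (hfc₀ : f c₀ = R)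
    (hleft : ∀ c : Fin n, f c < R → (c : ℕ) < C → c < c₀) :
    Ival f (R + 1) C = Ival f R C + 1 :=
  le_antisymm (Ival_succ_le f R C) ((incChain_Ival f R C).snoc hc₀ hfc₀ hleft).le_Ival

end IncreasingChains

section RookPlacements

variable {n : ℕ} {lam : List ℕ} {f : Fin n → ℕ}

theorem exists_eq_of_mem_fillSet_replicate_one {Ω : List (List ℕ)}
    (hf : f ∈ FillSet n lam (List.replicate lam.length 1) Ω) {r : ℕ} (hr : r < lam.length) :
    ∃ c, f c = r := by
  have hcard : (Finset.univ.filter fun c => f c = r).card = 1 := by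
    rw [hf.2.1 r, List.getD_eq_getElem _ _ (by simpa using hr), List.getElem_replicate]
  obtain ⟨c, hc⟩ := Finset.card_pos.mp (hcard ▸ one_pos)
  exact ⟨c, (Finset.mem_filter.mp hc).2⟩

theorem fContains_231 {c₁ c₂ c₃ : Fin n} (h₁₂ : c₁ < c₂) (h₂₃ : c₂ < c₃)
    (hf₃₁ : f c₃ < f c₁) (hf₁₂ : f c₁ < f c₂)
    (hshape : ∀ c ∈ [c₁, c₂, c₃], (c₃ : ℕ) < lam.getD (f c) 0) :
    FContains lam f [2, 3, 1] := by
  refine ⟨![c₁, c₂, c₃], ?_, ?_, ?_⟩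
  · exact Fin.strictMono_iff_lt_succ.mpr fun i => by fin_cases i <;> assumption
  · intro p q
    fin_cases p <;> fin_cases q <;> simp [List.get] <;> omega
  · intro p q
    have hcol : ((![c₁, c₂, c₃] q : Fin n) : ℕ) ≤ c₃ := by
      fin_cases q <;> simp [h₁₂.le.trans h₂₃.le, h₂₃.le]
    refine hcol.trans_lt (hshape _ ?_)
    fin_cases p <;> simp

theorem lt_of_not_fContains_231 (hav : ¬ FContains lam f [2, 3, 1]) {c₁ c₂ c : Fin n}
    (h₁₂ : c₁ < c₂) (hf₁₂ : f c₁ < f c₂) (hfc : f c < f c₁) {L : ℕ} (hcL : (c : ℕ) < L)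
    (hwide : ∀ r ≤ f c₂, L ≤ lam.getD r 0) : c < c₂ := by
  by_contra! h
  have h₂c : c₂ < c := h.lt_of_ne fun e => by rw [e] at hf₁₂; omega
  refine hav (fContains_231 h₁₂ h₂c hfc hf₁₂ fun x hx => hcL.trans_le (hwide _ ?_))
  simp only [List.mem_cons, List.not_mem_nil, or_false] at hx
  rcases hx with rfl | rfl | rfl <;> omega

end RookPlacements

theorem stmt_10_general (lam : List ℕ) (hF : IsFerrers lam) (n : ℕ)
    (f : Fin n → ℕ)
    (hf : f ∈ FillSet n lam (List.replicate lam.length 1) [[2, 3, 1]])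
    (b a L : ℕ) (hba : b + a ≤ lam.length)
    (hL : ∀ r, b ≤ r → r < b + a → lam.getD r 0 = L)
    (hinc : ∀ c c' : Fin n, b ≤ f c → f c < b + a → b ≤ f c' → f c' < b + a →
      c < c' → f c < f c')
    (j : ℕ) (hj1 : 1 ≤ j) (hj2 : j < a) :
    Ival f (b + j + 1) L = Ival f (b + j) L + 1 := by
  have hav : ¬ FContains lam f [2, 3, 1] := hf.2.2 _ (List.mem_singleton_self _)
  obtain ⟨c₀, hc₀⟩ := exists_eq_of_mem_fillSet_replicate_one hf (r := b + j) (by omega)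
  obtain ⟨c₁, hc₁⟩ := exists_eq_of_mem_fillSet_replicate_one hf (r := b + j - 1) (by omega)
  have hband : ∀ c c' : Fin n, b ≤ f c → f c' < b + a → f c < f c' → c < c' :=
    fun c c' hc hc' hlt => lt_of_not_ge fun hle => hle.eq_or_lt.elim
      (fun e => by rw [e] at hlt; omega)
      (fun h => (hinc c' c (by omega) hc' hc (by omega) h).not_gt hlt)
  have hwide : ∀ r ≤ b + j, L ≤ lam.getD r 0 :=
    fun r hr => hL (b + j) (by omega) (by omega) ▸ hF.1.antitone_getD hr
  have hc₀L : (c₀ : ℕ) < L := hL (b + j) (by omega) (by omega) ▸ hc₀ ▸ hf.1 c₀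
  refine Ival_succ_eq hc₀L hc₀ fun c hc hcL => ?_
  rcases lt_or_ge (f c) b with hcb | hcb
  · exact lt_of_not_fContains_231 hav (hband c₁ c₀ (by omega) (by omega) (by omega))
      (by omega) (by omega) hcL (hc₀ ▸ hwide)
  · exact hband c c₀ hcb (by omega) (by omega)

/-- If `f` is a 231-avoiding full rook placement on the Ferrers shape `lam` whose ones in
the band of rows `b, …, b + a - 1` (all of common length `L`) are arranged increasingly,
then the values `I` at the vertices `u_1, …, u_a` along the right border of the band
increase by exactly one at each step. -/
theorem stmt_10 (lam : List ℕ) (hF : IsFerrers lam) (n : ℕ) (hn : n = lam.getD 0 0)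
    (f : Fin n → ℕ)
    (hf : f ∈ FillSet n lam (List.replicate lam.length 1) [[2, 3, 1]])
    (b a L : ℕ) (hba : b + a ≤ lam.length)
    (hL : ∀ r, b ≤ r → r < b + a → lam.getD r 0 = L)
    (hinc : ∀ c c' : Fin n, b ≤ f c → f c < b + a → b ≤ f c' → f c' < b + a →
      c < c' → f c < f c')
    (j : ℕ) (hj1 : 1 ≤ j) (hj2 : j < a) :
    Ival f (b + j + 1) L = Ival f (b + j) L + 1 :=
  stmt_10_general lam hF n f hf b a L hba hL hinc j hj1 hj2
end

section
/- Let λ be a Ferrers shape and (a_1, a_2, ...) positive integers. The 'blowup' map—replacing row i of a filling by a_i rows and rearranging the a_i ones of row i in increasing fashion so that each 1 stays in its column and each new row contains exactly one 1—is a bijection from fillings of λ with one 1 per column and a_i ones in row i that avoid both 231 and 221, onto 231-avoiding full rook placements of the blown-up shape in which, within each band of a_i rows, the 1's increase from bottom-left to top-right. -/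
/-- The blown-up shape: row `i` of `lam` is replaced by `a.getD i 0` rows of its length. -/
def blowShape (lam a : List ℕ) : List ℕ :=
  (List.range lam.length).flatMap fun i => List.replicate (a.getD i 0) (lam.getD i 0)

/-- Index of the bottom row of the `i`-th band in the blown-up shape. -/
def blowRow (a : List ℕ) (i : ℕ) : ℕ := (a.take i).sum

/-- The blowup of a filling: the 1 of column `c`, lying in row `f c`, is moved into the
band of rows of the blown-up shape replacing row `f c`, the ones of each band being
arranged in increasing fashion (each 1 staying in its column). -/
def blowup {n : ℕ} (a : List ℕ) (f : Fin n → ℕ) : Fin n → ℕ := fun c =>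
  blowRow a (f c) + (Finset.univ.filter fun c' => f c' = f c ∧ c' < c).card

/-- Within each band of the blown-up shape, the ones increase from bottom-left to
top-right. -/
def BandIncreasing {n : ℕ} (a : List ℕ) (g : Fin n → ℕ) : Prop :=
  ∀ i : ℕ, ∀ c c' : Fin n,
    blowRow a i ≤ g c → g c < blowRow a (i + 1) →
    blowRow a i ≤ g c' → g c' < blowRow a (i + 1) →
    c < c' → g c < g c'

/-!
The blowup `g` of `f` puts the 1 of column `c` into the band of row `f c` and orders the 1's of
a band by column, so `g c < g c'` exactly when `(f c, c) < (f c', c')` lexicographically. For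
columns `c₀ < c₁ < c₂` this turns `g c₂ < g c₀ < g c₁` into `f c₂ < f c₀ ≤ f c₁`: a 231 of `g` is
a 231 or a 221 of `f`. A band consists of copies of its row, so the shape conditions agree as
well. Conversely, a rook placement that increases within bands determines `f` (the band of each
1), and `f` has the prescribed row counts because the bands partition the rows `0, …, n - 1`.
-/

open Finset Function

lemma List.lt_length_of_lt_getD {l : List ℕ} {i m : ℕ} (h : m < l.getD i 0) : i < l.length := by
  by_contra! hi
  rw [List.getD_eq_default _ _ hi] at h
  omega

section Bands

def band (a : List ℕ) (i : ℕ) : Finset ℕ := Ico (blowRow a i) (blowRow a (i + 1))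

variable {a : List ℕ} {i j r s : ℕ}

lemma blowRow_succ (a : List ℕ) (i : ℕ) : blowRow a (i + 1) = blowRow a i + a.getD i 0 := by
  rw [blowRow, blowRow, List.take_add_one, List.sum_append]
  cases h : a[i]? <;> simp [List.getD_eq_getElem?_getD, h]

lemma blowRow_mono (a : List ℕ) : Monotone (blowRow a) :=
  monotone_nat_of_le_succ fun i => by rw [blowRow_succ]; omega

lemma blowRow_le_sum (a : List ℕ) (i : ℕ) : blowRow a i ≤ a.sum :=
  (List.take_sublist i a).sum_le_sum fun _ _ => Nat.zero_le _

lemma blowRow_of_length_le (h : a.length ≤ i) : blowRow a i = a.sum := by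
  rw [blowRow, List.take_of_length_le h]

lemma card_band : #(band a i) = a.getD i 0 := by
  rw [band, Nat.card_Ico, blowRow_succ]; omega

lemma band_subset_range_sum : band a i ⊆ range a.sum := fun r hr => by
  have := blowRow_le_sum a (i + 1)
  simp only [band, mem_Ico] at hr
  simp only [mem_range]; omega

lemma le_of_mem_band_of_le (hr : r ∈ band a i) (hs : s ∈ band a j) (hrs : r ≤ s) : i ≤ j := by
  by_contra! hji
  have := blowRow_mono a (show j + 1 ≤ i from hji)
  simp only [band, mem_Ico] at hr hs
  omega

lemma lt_of_mem_band_of_lt (hr : r ∈ band a i) (hs : s ∈ band a j) (hij : i < j) : r < s := by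
  by_contra! hsr
  exact hij.not_ge (le_of_mem_band_of_le hs hr hsr)

lemma eq_of_mem_band (hi : r ∈ band a i) (hj : r ∈ band a j) : i = j :=
  le_antisymm (le_of_mem_band_of_le hi hj le_rfl) (le_of_mem_band_of_le hj hi le_rfl)

lemma lt_length_of_mem_band (hr : r ∈ band a i) : i < a.length := by
  by_contra! hi
  simp only [band, mem_Ico, blowRow_of_length_le hi, blowRow_of_length_le (hi.trans i.le_succ)]
    at hr
  omega

lemma exists_mem_band (hr : r < a.sum) : ∃ i, r ∈ band a i := by
  have hex : ∃ i, r < blowRow a (i + 1) := ⟨a.length, by rwa [blowRow_of_length_le (by omega)]⟩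
  refine ⟨Nat.find hex, mem_Ico.mpr ⟨?_, Nat.find_spec hex⟩⟩
  rcases h : Nat.find hex with _ | k
  · exact Nat.zero_le _
  · exact not_lt.mp (Nat.find_min hex (h ▸ k.lt_succ_self))

end Bands

section BlowShape

lemma blowRow_cons (b : ℕ) (a : List ℕ) (i : ℕ) : blowRow (b :: a) (i + 1) = b + blowRow a i := by
  simp [blowRow, List.take_succ_cons]

lemma blowShape_cons (x : ℕ) (lam a : List ℕ) :
    blowShape (x :: lam) a = List.replicate (a.getD 0 0) x ++ blowShape lam a.tail := by
  rw [blowShape, List.length_cons, List.range_succ_eq_map, List.flatMap_cons, List.flatMap_map]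
  congr 1
  refine List.flatMap_congr fun i _ => ?_
  cases a <;> rfl

lemma blowShape_length (lam a : List ℕ) : (blowShape lam a).length = blowRow a lam.length := by
  induction lam generalizing a with
  | nil => rfl
  | cons x lam ih =>
    cases a with
    | nil => simp [blowShape_cons, ih, blowRow]
    | cons b a => simp [blowShape_cons, ih, blowRow_cons]

lemma blowShape_getD_of_mem_band {lam a : List ℕ} {i r : ℕ} (hi : i < lam.length)
    (hr : r ∈ band a i) : (blowShape lam a).getD r 0 = lam.getD i 0 := by
  induction lam generalizing a i r with
  | nil => simp at hi
  | cons x lam ih =>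
    obtain _ | ⟨b, a⟩ := a
    · simp [band, blowRow] at hr
    rw [blowShape_cons, List.getD_cons_zero, List.tail_cons]
    obtain _ | i := i
    · have hrb : r < b := by simpa [band, blowRow] using hr
      rw [List.getD_append _ _ _ _ (by simpa using hrb), List.getD_replicate (h := hrb)]
      rfl
    · simp only [band, mem_Ico, blowRow_cons] at hr
      rw [List.getD_append_right _ _ _ _ (by simp only [List.length_replicate]; omega)]
      exact ih (by simpa using hi) (mem_Ico.mpr (by simp only [List.length_replicate]; omega))

end BlowShape

section RookPlacement

variable {n : ℕ} {g : Fin n → ℕ}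

lemma image_univ_eq_range (hg : Injective g) (hlt : ∀ c, g c < n) : univ.image g = range n :=
  eq_of_subset_of_card_le (fun r hr => by obtain ⟨c, -, rfl⟩ := mem_image.mp hr; simp [hlt])
    (by simp [card_image_of_injective _ hg])

lemma card_filter_comp_eq (hg : Injective g) (hlt : ∀ c, g c < n) (p : ℕ → Prop)
    [DecidablePred p] : #{c | p (g c)} = #{r ∈ range n | p r} := by
  rw [← image_univ_eq_range hg hlt, filter_image, card_image_of_injective _ hg]

lemma card_fiber_eq_replicate_getD_iff :
    (∀ r, #{c | g c = r} = (List.replicate n 1).getD r 0) ↔ Injective g ∧ ∀ c, g c < n := by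
  constructor
  · intro h
    have hlt : ∀ c, g c < n := fun c => by
      by_contra! hc
      have := h (g c)
      rw [List.getD_eq_default _ _ (by simpa using hc), card_eq_zero] at this
      exact (eq_empty_iff_forall_notMem.mp this) c (by simp)
    refine ⟨fun c c' hcc' => ?_, hlt⟩
    have hone := h (g c)
    rw [List.getD_replicate (h := hlt c)] at hone
    exact card_le_one.mp hone.le c (by simp) c' (by simp [hcc'])
  · rintro ⟨hg, hlt⟩ r
    rw [card_filter_comp_eq hg hlt (· = r), filter_eq', List.getD_eq_getElem?_getD,
      List.getElem?_replicate]
    split_ifs <;> simp_all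

end RookPlacement

section BandLift

variable {a : List ℕ} {n : ℕ} {f g : Fin n → ℕ}

def IsBandLift (a : List ℕ) (f g : Fin n → ℕ) : Prop :=
  (∀ c, g c ∈ band a (f c)) ∧ ∀ c c', f c = f c' → c < c' → g c < g c'

lemma isBandLift_iff : IsBandLift a f g ↔ (∀ c, g c ∈ band a (f c)) ∧ BandIncreasing a g := by
  refine and_congr_right fun hband => ⟨fun hinc i c c' h₁ h₂ h₃ h₄ hcc' => ?_,
    fun hinc c c' hf hcc' => ?_⟩
  · have hc := eq_of_mem_band (mem_Ico.mpr ⟨h₁, h₂⟩) (hband c)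
    have hc' := eq_of_mem_band (mem_Ico.mpr ⟨h₃, h₄⟩) (hband c')
    exact hinc c c' (hc ▸ hc') hcc'
  · have hc := mem_Ico.mp (hband c)
    have hc' := mem_Ico.mp (hband c')
    rw [hf] at hc
    exact hinc (f c') c c' hc.1 hc.2 hc'.1 hc'.2 hcc'

namespace IsBandLift

lemma lt_iff (h : IsBandLift a f g) {c c' : Fin n} :
    g c < g c' ↔ f c < f c' ∨ f c = f c' ∧ c < c' := by
  constructor
  · intro hlt
    rcases (le_of_mem_band_of_le (h.1 c) (h.1 c') hlt.le).lt_or_eq with hf | hf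
    · exact Or.inl hf
    · refine Or.inr ⟨hf, lt_of_not_ge fun hc'c => ?_⟩
      rcases hc'c.lt_or_eq with hc'c | rfl
      · exact (h.2 c' c hf.symm hc'c).not_gt hlt
      · exact hlt.false
  · rintro (hf | ⟨hf, hcc'⟩)
    · exact lt_of_mem_band_of_lt (h.1 c) (h.1 c') hf
    · exact h.2 c c' hf hcc'

lemma injective (h : IsBandLift a f g) : Injective g := by
  intro c c' hcc'
  have hf : f c = f c' := eq_of_mem_band (h.1 c) (hcc' ▸ h.1 c')
  rcases lt_trichotomy c c' with hlt | heq | hlt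
  · exact absurd hcc' (h.2 c c' hf hlt).ne
  · exact heq
  · exact absurd hcc' (h.2 c' c hf.symm hlt).ne'

lemma lt_sum (h : IsBandLift a f g) (c : Fin n) : g c < a.sum :=
  mem_range.mp (band_subset_range_sum (h.1 c))

lemma card_fiber (h : IsBandLift a f g) (hn : a.sum = n) (i : ℕ) :
    #{c | f c = i} = a.getD i 0 := by
  have hfib : ∀ c, f c = i ↔ g c ∈ band a i :=
    fun c => ⟨fun hc => hc ▸ h.1 c, fun hc => eq_of_mem_band (h.1 c) hc⟩
  simp_rw [hfib]
  rw [card_filter_comp_eq h.injective (fun c => hn ▸ h.lt_sum c) (· ∈ band a i),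
    filter_mem_eq_inter, inter_eq_right.mpr (hn ▸ band_subset_range_sum), card_band]

lemma eq_blowup (h : IsBandLift a f g) (hcount : ∀ i, #{c | f c = i} = a.getD i 0) :
    g = blowup a f := by
  funext c
  set F : Finset (Fin n) := {c' | f c' = f c}
  -- `F` has as many columns as the band has rows, so `g` maps it onto the band
  have himage : F.image g = band a (f c) :=
    eq_of_subset_of_card_le (fun r hr => by
        obtain ⟨c', hc', rfl⟩ := mem_image.mp hr
        exact (mem_filter.mp hc').2 ▸ h.1 c')
      (by rw [card_band, card_image_of_injective _ h.injective, hcount])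
  have hbelow :
      ({c' | f c' = f c ∧ c' < c} : Finset (Fin n)) = F.filter fun c' => g c' < g c := by
    ext c'
    simp only [F, mem_filter, mem_univ, true_and, h.lt_iff]
    exact and_congr_right fun hf => by simp [hf]
  have hcard : #{c' | f c' = f c ∧ c' < c} = g c - blowRow a (f c) := by
    rw [hbelow, ← card_image_of_injective _ h.injective, ← filter_image (p := (· < g c)), himage,
      band, Ico_filter_lt, min_eq_right (h.1 c |> mem_Ico.mp).2.le, Nat.card_Ico]
  have := (mem_Ico.mp (h.1 c)).1
  rw [blowup, hcard]
  omega

end IsBandLift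

lemma isBandLift_blowup (hcount : ∀ i, #{c | f c = i} = a.getD i 0) :
    IsBandLift a f (blowup a f) := by
  refine ⟨fun c => mem_Ico.mpr ⟨Nat.le_add_right _ _, ?_⟩, fun c c' hf hcc' => ?_⟩
  · rw [blowRow_succ, blowup, ← hcount (f c)]
    refine Nat.add_lt_add_left (card_lt_card ⟨fun c' => by simp +contextual, ?_⟩) _
    exact fun hsub => (mem_filter.mp (hsub (by simp : c ∈ _))).2.2.false
  · rw [blowup, blowup, hf]
    refine Nat.add_lt_add_left (card_lt_card ⟨fun d hd => ?_, fun hsub => ?_⟩) _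
    · simp only [mem_filter, mem_univ, true_and] at hd ⊢
      exact ⟨hd.1, hd.2.trans hcc'⟩
    · exact (mem_filter.mp (hsub (by simp [hf, hcc'] : c ∈ _))).2.2.false

end BandLift

section Patterns

variable {lam : List ℕ} {n : ℕ} {f : Fin n → ℕ}

lemma fContains_231_iff : FContains lam f [2, 3, 1] ↔ ∃ c : Fin 3 → Fin n, StrictMono c ∧
    (f (c 2) < f (c 0) ∧ f (c 0) < f (c 1)) ∧ ∀ j k, (c k : ℕ) < lam.getD (f (c j)) 0 := by
  refine exists_congr fun c => and_congr_right fun _ => and_congr_left fun _ => ?_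
  refine ⟨fun h => ⟨(h 2 0).mpr (by decide), (h 0 1).mpr (by decide)⟩, fun h j k => ?_⟩
  fin_cases j <;> fin_cases k <;> simp <;> omega

lemma fContains_221_iff : FContains lam f [2, 2, 1] ↔ ∃ c : Fin 3 → Fin n, StrictMono c ∧
    (f (c 2) < f (c 0) ∧ f (c 0) = f (c 1)) ∧ ∀ j k, (c k : ℕ) < lam.getD (f (c j)) 0 := by
  refine exists_congr fun c => and_congr_right fun _ => and_congr_left fun _ => ?_
  refine ⟨fun h => ⟨(h 2 0).mpr (by decide), ?_⟩, fun h j k => ?_⟩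
  · exact le_antisymm (not_lt.mp fun hlt => absurd ((h 1 0).mp hlt) (by decide))
      (not_lt.mp fun hlt => absurd ((h 0 1).mp hlt) (by decide))
  · fin_cases j <;> fin_cases k <;> simp <;> omega

lemma IsBandLift.fContains_231_iff {a : List ℕ} {g : Fin n → ℕ} (h : IsBandLift a f g)
    (hf : ∀ c, f c < lam.length) :
    FContains (blowShape lam a) g [2, 3, 1] ↔
      FContains lam f [2, 3, 1] ∨ FContains lam f [2, 2, 1] := by
  rw [_root_.fContains_231_iff, _root_.fContains_231_iff, fContains_221_iff, ← exists_or]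
  refine exists_congr fun c => ?_
  simp_rw [blowShape_getD_of_mem_band (hf _) (h.1 _)]
  by_cases hc : StrictMono c
  · have h₀₁ : c 0 < c 1 := hc (by decide)
    have h₂₀ : ¬ c 2 < c 0 := not_lt.mpr (hc (by decide : (0 : Fin 3) < 2)).le
    rw [h.lt_iff, h.lt_iff]
    simp only [hc, h₀₁, h₂₀, and_true, and_false, or_false, true_and]
    tauto
  · simp [hc]

end Patterns

theorem stmt_12_general (lam a : List ℕ) (ha : a.length = lam.length)
    (n : ℕ) (hsum : a.sum = n) :
    Set.BijOn (blowup a)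
      (FillSet n lam a [[2, 3, 1], [2, 2, 1]])
      (FillSet n (blowShape lam a) (List.replicate (blowShape lam a).length 1) [[2, 3, 1]]
        ∩ {g | BandIncreasing a g}) := by
  have hlen : (blowShape lam a).length = n := by
    rw [blowShape_length, ← ha, blowRow_of_length_le le_rfl, hsum]
  refine ⟨?_, ?_, ?_⟩
  · rintro f ⟨hshape, hcount, havoid⟩
    have hg := isBandLift_blowup hcount
    have hrows c : f c < lam.length := List.lt_length_of_lt_getD (hshape c)
    refine ⟨⟨fun c => ?_, ?_, ?_⟩, (isBandLift_iff.mp hg).2⟩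
    · rw [blowShape_getD_of_mem_band (hrows c) (hg.1 c)]
      exact hshape c
    · rw [hlen, card_fiber_eq_replicate_getD_iff]
      exact ⟨hg.injective, fun c => hsum ▸ hg.lt_sum c⟩
    · simpa [hg.fContains_231_iff hrows] using havoid
  · intro f₁ h₁ f₂ h₂ h
    funext c
    exact eq_of_mem_band ((isBandLift_blowup h₁.2.1).1 c) (h ▸ (isBandLift_blowup h₂.2.1).1 c)
  · rintro g ⟨⟨hshape, hcount, havoid⟩, hinc⟩
    rw [hlen, card_fiber_eq_replicate_getD_iff] at hcount
    choose f hf using fun c => exists_mem_band (hsum ▸ hcount.2 c)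
    have hg : IsBandLift a f g := isBandLift_iff.mpr ⟨hf, hinc⟩
    have hrows c : f c < lam.length := ha ▸ lt_length_of_mem_band (hf c)
    refine ⟨f, ⟨fun c => ?_, hg.card_fiber hsum, ?_⟩, (hg.eq_blowup (hg.card_fiber hsum)).symm⟩
    · rw [← blowShape_getD_of_mem_band (hrows c) (hf c)]
      exact hshape c
    · simpa [hg.fContains_231_iff hrows] using havoid

/-- The blowup map is a bijection from the {231, 221}-avoiding fillings of `lam` with one
1 per column and `a.getD i 0` ones in row `i` onto the 231-avoiding full rook placements
of the blown-up shape whose ones increase within each band. -/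
theorem stmt_12 (lam a : List ℕ) (hF : IsFerrers lam) (ha : a.length = lam.length)
    (hpos : ∀ t ∈ a, 0 < t) (n : ℕ) (hn : n = lam.getD 0 0) (hsum : a.sum = n) :
    Set.BijOn (blowup a)
      (FillSet n lam a [[2, 3, 1], [2, 2, 1]])
      (FillSet n (blowShape lam a) (List.replicate (blowShape lam a).length 1) [[2, 3, 1]]
        ∩ {g | BandIncreasing a g}) :=
  stmt_12_general lam a ha n hsum
end

section
/- If for every Ferrers shape λ the number of 0-1-fillings of λ with one 1 per column avoiding 231 is at most the number avoiding 312, then for every pattern β and every Ferrers shape λ, the number of 0-1-fillings of λ with one 1 per column avoiding 231 ⊕ β is at most the number avoiding 312 ⊕ β. -/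
/-- Direct sum of words: append `w` with all letters shifted up by `k`. -/
def oplus (k : ℕ) (x w : List ℕ) : List ℕ := x ++ w.map (· + k)

/-- `|W_λ(Ω)|`: the number of all fillings of `lam` with exactly one 1 per column (no row
constraint) avoiding all patterns in `Ω`. -/
noncomputable def TotalCount (lam : List ℕ) (Ω : List (List ℕ)) : ℕ :=
  Nat.card {f : Fin (lam.getD 0 0) → ℕ //
    (∀ c : Fin (lam.getD 0 0), (c : ℕ) < lam.getD (f c) 0) ∧ ∀ x ∈ Ω, ¬ FContains lam f x}

/-!
Call a cell `(i, j)` of a filling *green* if some occurrence of `β` lies entirely inside the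
shape, strictly above row `i` and strictly to the right of column `j`. Since every letter of
`x ∈ {231, 312}` is smaller than every letter of `β + 3`, a filling contains `x ⊕ β` exactly
when it contains `x` using green cells only. The green region is a Ferrers shape, and it is
determined by the 1s lying outside it: an occurrence of `β` witnessing a green cell can be
pushed up and to the right until none of its own 1s is green. Hence, fixing the 1s outside the
green region, the fillings with that outer part correspond to the fillings of the Ferrers shape
formed by the green cells of the columns whose 1 is green, and `x ⊕ β`-avoidance becomes
`x`-avoidance there. Applying the hypothesis to each such fibre and summing gives the claim.
-/

open Finset

theorem IsFerrers.getD_antitone {lam : List ℕ} (hlam : IsFerrers lam) :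
    Antitone (lam.getD · 0) := by
  intro i j hij
  rcases hij.eq_or_lt with rfl | hij
  · rfl
  by_cases hj : j < lam.length
  · simp only [List.getD_eq_getElem _ _ hj, List.getD_eq_getElem _ _ (hij.trans hj)]
    exact hlam.1.rel_get_of_lt (a := ⟨i, hij.trans hj⟩) (b := ⟨j, hj⟩) hij
  · simp only [List.getD_eq_default _ _ (not_lt.mp hj), zero_le]

theorem Nat.card_le_card_of_card_fiber_le {α β γ : Type*} [Finite α] [Finite β] (p : α → γ)
    (q : β → γ) (h : ∀ a, Nat.card {a' // p a' = p a} ≤ Nat.card {b // q b = p a}) :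
    Nat.card α ≤ Nat.card β := by
  have hemb : ∀ y, Nonempty ({a // p a = y} ↪ {b // q b = y}) := fun y => by
    by_cases hy : ∃ a, p a = y
    · obtain ⟨a, rfl⟩ := hy
      have := Fintype.ofFinite {a' // p a' = p a}
      have := Fintype.ofFinite {b // q b = p a}
      have hcard := h a
      rw [Nat.card_eq_fintype_card, Nat.card_eq_fintype_card] at hcard
      exact Function.Embedding.nonempty_of_card_le hcard
    · have : IsEmpty {a // p a = y} := ⟨fun a => hy ⟨a.1, a.2⟩⟩
      exact ⟨Function.Embedding.ofIsEmpty⟩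
  have : Finite (Σ y, {b // q b = y}) := .of_equiv _ (Equiv.sigmaFiberEquiv q).symm
  calc Nat.card α = Nat.card (Σ y, {a // p a = y}) := Nat.card_congr (Equiv.sigmaFiberEquiv p).symm
    _ ≤ Nat.card (Σ y, {b // q b = y}) := Nat.card_le_card_of_injective _
      ((Function.Embedding.refl γ).sigmaMap fun y => (hemb y).some).injective
    _ = Nat.card β := Nat.card_congr (Equiv.sigmaFiberEquiv q)

theorem Fin.strictMono_append {α : Type*} [Preorder α] {a b : ℕ} {c : Fin a → α}
    {d : Fin b → α} (hc : StrictMono c) (hd : StrictMono d) (hcd : ∀ i j, c i < d j) :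
    StrictMono (Fin.append c d) := by
  intro i i' h
  cases i using Fin.addCases <;> cases i' using Fin.addCases <;>
    simp only [Fin.append_left, Fin.append_right]
  · exact hc ((Fin.castAddOrderEmb b).lt_iff_lt.1 h)
  · exact hcd _ _
  · exact absurd h (not_lt.2 (Fin.le_def.2 (by simp only [Fin.val_castAdd, Fin.val_natAdd]; omega)))
  · exact hd ((Fin.natAdd_lt_natAdd_iff a).1 h)

theorem Nat.mem_iff_lt_card_of_isLowerSet {s : Finset ℕ} (hs : IsLowerSet (s : Set ℕ))
    {i : ℕ} : i ∈ s ↔ i < #s := by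
  rcases hs.eq_univ_or_Iio with h | ⟨a, h⟩
  · exact absurd (h ▸ s.finite_toSet) Set.infinite_univ
  · rw [show s = Iio a from coe_injective (by rw [h, coe_Iio]), Nat.card_Iio, mem_Iio]

theorem Fin.mem_iff_lt_card_of_isLowerSet {N : ℕ} {s : Finset (Fin N)}
    (hs : IsLowerSet (s : Set (Fin N))) {i : Fin N} : i ∈ s ↔ (i : ℕ) < #s := by
  rcases hs.eq_univ_or_Iio with h | ⟨a, h⟩
  · simp [coe_eq_univ.1 h]
  · rw [show s = Iio a from coe_injective (by rw [h, coe_Iio]), Fin.card_Iio, mem_Iio, Fin.lt_def]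

namespace ShapeWilf

variable {n : ℕ}

def Cell (lam : List ℕ) (i j : ℕ) : Prop := j < lam.getD i 0

theorem Cell.lt_length {lam : List ℕ} {i j : ℕ} (h : Cell lam i j) : i < lam.length := by
  by_contra hi
  rw [Cell, List.getD_eq_default _ _ (not_lt.mp hi)] at h
  exact Nat.not_lt_zero _ h

theorem Cell.mono {lam : List ℕ} (hlam : IsFerrers lam) {i j i' j' : ℕ} (h : Cell lam i j)
    (hi : i' ≤ i) (hj : j' ≤ j) : Cell lam i' j' :=
  (hj.trans_lt h).trans_le (hlam.getD_antitone hi)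

def InShape (lam : List ℕ) (f : Fin n → ℕ) : Prop := ∀ c : Fin n, Cell lam (f c) c

theorem totalCount_singleton (lam x : List ℕ) :
    TotalCount lam [x] =
      Nat.card {f : Fin (lam.getD 0 0) → ℕ // InShape lam f ∧ ¬ FContains lam f x} :=
  Nat.card_congr (Equiv.subtypeEquivRight fun f => by simp [InShape, Cell])

instance finite_inShape (lam : List ℕ) (P : (Fin n → ℕ) → Prop) :
    Finite {f : Fin n → ℕ // InShape lam f ∧ P f} :=
  Set.Finite.to_subtype <| (Set.Finite.pi' fun _ => Set.finite_Iio lam.length).subset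
    fun _ hf c => (hf.1 c).lt_length

def Occurs (S : ℕ → ℕ → Prop) {k : ℕ} (p : Fin k → ℕ) (f : Fin n → ℕ) (c : Fin k → Fin n) :
    Prop :=
  StrictMono c ∧ (∀ j j', f (c j) < f (c j') ↔ p j < p j') ∧ ∀ j j', S (f (c j)) (c j')

theorem fContains_iff {lam x : List ℕ} {f : Fin n → ℕ} :
    FContains lam f x ↔ ∃ c, Occurs (Cell lam) x.get f c :=
  Iff.rfl

theorem Occurs.comp_orderEmbedding {S : ℕ → ℕ → Prop} {k k' : ℕ} {p : Fin k → ℕ}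
    {f : Fin n → ℕ} {c : Fin k → Fin n} (h : Occurs S p f c) (τ : Fin k' ↪o Fin k) :
    Occurs S (p ∘ τ) f (c ∘ τ) :=
  ⟨h.1.comp τ.strictMono, fun j j' => h.2.1 (τ j) (τ j'), fun j j' => h.2.2 (τ j) (τ j')⟩

theorem exists_occurs_comp_orderIso {S : ℕ → ℕ → Prop} {k k' : ℕ} {p : Fin k' → ℕ}
    {f : Fin n → ℕ} (σ : Fin k ≃o Fin k') :
    (∃ c, Occurs S (p ∘ σ) f c) ↔ ∃ c, Occurs S p f c :=
  ⟨fun ⟨c, h⟩ => ⟨c ∘ σ.symm, by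
      simpa [Function.comp_def] using h.comp_orderEmbedding σ.symm.toOrderEmbedding⟩,
    fun ⟨c, h⟩ => ⟨c ∘ σ, h.comp_orderEmbedding σ.toOrderEmbedding⟩⟩

theorem Occurs.congr {S : ℕ → ℕ → Prop} {k : ℕ} {p : Fin k → ℕ} {f g : Fin n → ℕ}
    {c : Fin k → Fin n} (h : Occurs S p f c) (hfg : ∀ j, f (c j) = g (c j)) :
    Occurs S p g c := by
  simpa only [Occurs, hfg] using h

theorem occurs_add_const {S : ℕ → ℕ → Prop} {k : ℕ} {p : Fin k → ℕ} {f : Fin n → ℕ}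
    {c : Fin k → Fin n} (m : ℕ) : Occurs S (fun j => p j + m) f c ↔ Occurs S p f c := by
  simp only [Occurs, Nat.add_lt_add_iff_right]

theorem occurs_append_iff {lam : List ℕ} (hlam : IsFerrers lam) {a b : ℕ} {p : Fin a → ℕ}
    {q : Fin b → ℕ} (hpq : ∀ j t, p j < q t) {f : Fin n → ℕ} {c : Fin a → Fin n}
    {d : Fin b → Fin n} :
    Occurs (Cell lam) (Fin.append p q) f (Fin.append c d) ↔
      Occurs (Cell lam) p f c ∧ Occurs (Cell lam) q f d ∧ ∀ j t, f (c j) < f (d t) ∧ c j < d t := by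
  constructor
  · intro h
    have hlt : ∀ j t, Fin.castAdd b j < Fin.natAdd a t := fun j t =>
      Fin.lt_def.2 (by simp only [Fin.val_castAdd, Fin.val_natAdd]; omega)
    refine ⟨?_, ?_, fun j t => ⟨?_, ?_⟩⟩
    · simpa [Function.comp_def, Fin.castAddOrderEmb] using
        h.comp_orderEmbedding (Fin.castAddOrderEmb b)
    · simpa [Function.comp_def, Fin.natAddOrderEmb] using
        h.comp_orderEmbedding (Fin.natAddOrderEmb a)
    · simpa using (h.2.1 (Fin.castAdd b j) (Fin.natAdd a t)).2 (by simpa using hpq j t)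
    · simpa using h.1 (hlt j t)
  · rintro ⟨⟨hcmono, hcorder, hccell⟩, ⟨hdmono, hdorder, hdcell⟩, hcd⟩
    refine ⟨Fin.strictMono_append hcmono hdmono fun j t => (hcd j t).2, fun i i' => ?_,
      fun i i' => ?_⟩
    · cases i using Fin.addCases <;> cases i' using Fin.addCases <;>
        simp only [Fin.append_left, Fin.append_right, hcorder, hdorder]
      · exact iff_of_true (hcd _ _).1 (hpq _ _)
      · exact iff_of_false (lt_asymm (hcd _ _).1) (lt_asymm (hpq _ _))
    · cases i using Fin.addCases <;> cases i' using Fin.addCases <;>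
        simp only [Fin.append_left, Fin.append_right]
      · exact hccell _ _
      · rename_i j t
        exact (hdcell t t).mono hlam (hcd j t).1.le le_rfl
      · rename_i t j
        exact (hdcell t t).mono hlam le_rfl (hcd j t).2.le
      · exact hdcell _ _

theorem exists_occurs_comp_iff {S S' : ℕ → ℕ → Prop} {k N : ℕ} {p : Fin k → ℕ} {f : Fin n → ℕ}
    (e : Fin N ↪o Fin n) (hS' : ∀ r (i : Fin N), S' r i ↔ S r (e i))
    (hrange : ∀ c, Occurs S p f c → ∀ j, c j ∈ Set.range e) :
    (∃ c, Occurs S p f c) ↔ ∃ c, Occurs S' p (f ∘ e) c := by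
  have hcomp : ∀ c, Occurs S p f (e ∘ c) ↔ Occurs S' p (f ∘ e) c := fun c => by
    simp only [Occurs, Function.comp_apply, hS']
    exact and_congr_left' ⟨fun h _ _ hij => e.lt_iff_lt.1 (h hij), e.strictMono.comp⟩
  constructor
  · rintro ⟨c, hc⟩
    choose c' hc' using hrange c hc
    exact ⟨c', (hcomp c').1 (by rwa [show e ∘ c' = c from funext hc'])⟩
  · rintro ⟨c, hc⟩
    exact ⟨e ∘ c, (hcomp c).2 hc⟩

section Green

variable {lam : List ℕ} {b : ℕ} {q : Fin b → ℕ} {f g : Fin n → ℕ} {i j i' j' : ℕ}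

def Green (lam : List ℕ) (q : Fin b → ℕ) (f : Fin n → ℕ) (i j : ℕ) : Prop :=
  ∃ d, Occurs (Cell lam) q f d ∧ ∀ t, i < f (d t) ∧ j < d t

theorem Green.mono (h : Green lam q f i j) (hi : i' ≤ i) (hj : j' ≤ j) : Green lam q f i' j' :=
  let ⟨d, hd, hne⟩ := h
  ⟨d, hd, fun t => ⟨hi.trans_lt (hne t).1, hj.trans_lt (hne t).2⟩⟩

theorem Green.lt_length [NeZero b] (h : Green lam q f i j) : i < lam.length :=
  let ⟨_, hd, hne⟩ := h
  (hne 0).1.trans (hd.2.2 0 0).lt_length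

theorem Green.cell [NeZero b] (hlam : IsFerrers lam) (h : Green lam q f i j) : Cell lam i j :=
  let ⟨_, hd, hne⟩ := h
  (hd.2.2 0 0).mono hlam (hne 0).1.le (hne 0).2.le

theorem Green.exists_occurs_not_green [NeZero b] (h : Green lam q f i j) :
    ∃ d, Occurs (Cell lam) q f d ∧ (∀ t, i < f (d t) ∧ j < d t) ∧
      ∀ t, ¬ Green lam q f (f (d t)) (d t) := by
  classical
  obtain ⟨d, hd, hdmax⟩ := Finset.exists_max_image
    (univ.filter fun d => Occurs (Cell lam) q f d ∧ ∀ t, i < f (d t) ∧ j < d t) (fun d => d 0)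
    (let ⟨d, hd⟩ := h; ⟨d, by simpa using hd⟩)
  rw [mem_filter] at hd
  refine ⟨d, hd.2.1, hd.2.2, fun t ⟨d', hd', hne'⟩ => ?_⟩
  have hle := hdmax d' (mem_filter.2 ⟨mem_univ _, hd', fun s =>
    ⟨(hd.2.2 t).1.trans (hne' s).1, (hd.2.2 t).2.trans (hne' s).2⟩⟩)
  have hd0 : d 0 ≤ d t := hd.2.1.1.monotone (Fin.zero_le t)
  exact absurd (hd0.trans_lt (Fin.lt_def.2 (hne' 0).2)) (not_lt.2 hle)

theorem Green.of_agree [NeZero b] (hfg : ∀ c, ¬ Green lam q f (f c) c → f c = g c)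
    (h : Green lam q f i j) : Green lam q g i j := by
  obtain ⟨d, hd, hne, hnot⟩ := h.exists_occurs_not_green
  have heq : ∀ t, f (d t) = g (d t) := fun t => hfg _ (hnot t)
  exact ⟨d, hd.congr heq, fun t => heq t ▸ hne t⟩

end Green

theorem exists_occurs_green_iff {lam : List ℕ} (hlam : IsFerrers lam) {a b : ℕ} [NeZero a]
    [NeZero b] {p : Fin a → ℕ} {q : Fin b → ℕ} {f : Fin n → ℕ} :
    (∃ c d, Occurs (Cell lam) p f c ∧ Occurs (Cell lam) q f d ∧
        ∀ j t, f (c j) < f (d t) ∧ c j < d t) ↔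
      ∃ c, Occurs (Green lam q f) p f c := by
  constructor
  · rintro ⟨c, d, ⟨hcmono, hcorder, -⟩, hd, hcd⟩
    exact ⟨c, hcmono, hcorder, fun j j' => ⟨d, hd, fun t => ⟨(hcd j t).1, (hcd j' t).2⟩⟩⟩
  · rintro ⟨c, hcmono, hcorder, hgreen⟩
    obtain ⟨j₁, -, hj₁⟩ := univ.exists_max_image (fun j => f (c j)) univ_nonempty
    obtain ⟨j₂, -, hj₂⟩ := univ.exists_max_image c univ_nonempty
    obtain ⟨d, hd, hne⟩ := hgreen j₁ j₂
    exact ⟨c, d, ⟨hcmono, hcorder, fun j j' => (hgreen j j').cell hlam⟩, hd, fun j t =>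
      ⟨(hj₁ j (mem_univ _)).trans_lt (hne t).1, (hj₂ j (mem_univ _)).trans_lt (hne t).2⟩⟩

theorem length_oplus (m : ℕ) (x β : List ℕ) :
    x.length + β.length = (oplus m x β).length := by
  simp [oplus]

theorem get_oplus (m : ℕ) (x β : List ℕ) :
    (oplus m x β).get ∘ Fin.castOrderIso (length_oplus m x β) =
      Fin.append x.get fun t => β.get t + m := by
  funext i
  cases i using Fin.addCases with
  | left j =>
    change (x ++ β.map (· + m))[(j : ℕ)] = _
    simp [List.getElem_append_left]
  | right t =>
    change (x ++ β.map (· + m))[x.length + t] = _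
    simp [List.getElem_append_right]

theorem fContains_oplus_iff {lam x β : List ℕ} (hlam : IsFerrers lam) {m : ℕ}
    (hx : ∀ l ∈ x, l ≤ m) (hβ : ∀ l ∈ β, 0 < l) [NeZero x.length] [NeZero β.length]
    {f : Fin n → ℕ} :
    FContains lam f (oplus m x β) ↔ ∃ c, Occurs (Green lam β.get f) x.get f c := by
  have hxβ : ∀ j t, x.get j < β.get t + m := fun j t =>
    (hx _ (List.get_mem x j)).trans_lt (Nat.lt_add_of_pos_left (hβ _ (List.get_mem β t)))
  rw [fContains_iff, ← exists_occurs_comp_orderIso (Fin.castOrderIso (length_oplus m x β)),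
    get_oplus, ← exists_occurs_green_iff hlam]
  simp_rw [← occurs_add_const (p := β.get) m, ← occurs_append_iff hlam hxβ]
  exact ⟨fun ⟨c, h⟩ => ⟨_, _, Fin.append_castAdd_natAdd (f := c) ▸ h⟩, fun ⟨_, _, h⟩ => ⟨_, h⟩⟩

section RestrictedShape

open scoped Classical

variable (S : ℕ → ℕ → Prop) (D : Finset (Fin n))

noncomputable def rowLength (r : ℕ) : ℕ := #(D.filter fun c : Fin n => S r c)

/-- When `S` (a set of cells, row first) is down-closed with all rows below `L`, this is the
Ferrers shape formed by the columns of `S` indexed by `D`. -/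
noncomputable def restrictShape (L : ℕ) : List ℕ :=
  List.ofFn fun r : Fin #((range L).filter fun r => 0 < rowLength S D r) => rowLength S D r

variable {S D} {L : ℕ} (hS : ∀ ⦃i j i' j'⦄, S i j → i' ≤ i → j' ≤ j → S i' j')
  (hL : ∀ i j, S i j → i < L)
include hS

theorem rowLength_antitone : Antitone (rowLength S D) := fun _ _ hr =>
  card_le_card (monotone_filter_right _ fun _ _ hc => hS hc hr le_rfl)

include hL

theorem lt_length_restrictShape_iff {r : ℕ} :
    r < (restrictShape S D L).length ↔ 0 < rowLength S D r := by
  have hlower : IsLowerSet (((range L).filter fun r => 0 < rowLength S D r : Finset ℕ) : Set ℕ) :=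
    fun r r' hr' hr => by
      simp only [coe_filter, mem_range, Set.mem_ofPred_eq] at hr ⊢
      exact ⟨hr'.trans_lt hr.1, hr.2.trans_le (rowLength_antitone hS hr')⟩
  rw [restrictShape, List.length_ofFn, ← Nat.mem_iff_lt_card_of_isLowerSet hlower, mem_filter,
    mem_range, and_iff_right_iff_imp]
  intro hr
  obtain ⟨c, hc⟩ := card_pos.1 hr
  exact hL _ _ (mem_filter.1 hc).2

theorem getD_restrictShape (r : ℕ) : (restrictShape S D L).getD r 0 = rowLength S D r := by
  by_cases hr : 0 < rowLength S D r
  · rw [List.getD_eq_getElem _ _ ((lt_length_restrictShape_iff hS hL).2 hr)]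
    simp [restrictShape]
  · rw [List.getD_eq_default _ _ (not_lt.1 fun h => hr ((lt_length_restrictShape_iff hS hL).1 h))]
    omega

theorem isFerrers_restrictShape : IsFerrers (restrictShape S D L) := by
  refine ⟨List.pairwise_ofFn.2 fun r r' h => rowLength_antitone hS h.le, fun t ht => ?_⟩
  obtain ⟨r, rfl⟩ := List.mem_ofFn.1 ht
  exact (lt_length_restrictShape_iff hS hL).1 (by simp [restrictShape])

theorem getD_zero_restrictShape (hD : ∀ c ∈ D, S 0 c) :
    (restrictShape S D L).getD 0 0 = #D := by
  rw [getD_restrictShape hS hL, rowLength, filter_true_of_mem hD]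

theorem cell_restrictShape_iff {k : ℕ} (hk : #D = k) (r : ℕ) (i : Fin k) :
    Cell (restrictShape S D L) r i ↔ S r (D.orderEmbOfFin hk i) := by
  set e := D.orderEmbOfFin hk
  have hlower : IsLowerSet ((univ.filter fun i => S r (e i) : Finset (Fin k)) : Set (Fin k)) :=
    fun i i' hi' hi => by
      simp only [coe_filter, mem_univ, true_and, Set.mem_ofPred_eq] at hi ⊢
      exact hS hi le_rfl (e.monotone hi')
  have hcard : #(univ.filter fun i => S r (e i)) = rowLength S D r := by
    rw [rowLength, ← map_orderEmbOfFin_univ D hk, filter_map, card_map]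
    rfl
  rw [Cell, getD_restrictShape hS hL, ← hcard, ← Fin.mem_iff_lt_card_of_isLowerSet hlower]
  simp

end RestrictedShape

section Fiber

open scoped Classical

variable {lam : List ℕ} {b : ℕ} {q : Fin b → ℕ} {f g f₀ : Fin n → ℕ}

noncomputable def offGreen (lam : List ℕ) (q : Fin b → ℕ) (f : Fin n → ℕ) (c : Fin n) :
    Option ℕ :=
  if Green lam q f (f c) c then none else some (f c)

noncomputable def greenCols (lam : List ℕ) (q : Fin b → ℕ) (f : Fin n → ℕ) : Finset (Fin n) :=
  univ.filter fun c => Green lam q f (f c) c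

theorem offGreen_eq_none_iff {c : Fin n} : offGreen lam q f c = none ↔ Green lam q f (f c) c := by
  unfold offGreen
  split_ifs with h <;> simp [h]

theorem offGreen_eq_some_iff {c : Fin n} {v : ℕ} :
    offGreen lam q f c = some v ↔ ¬ Green lam q f (f c) c ∧ f c = v := by
  unfold offGreen
  split_ifs with h <;> simp [h]

theorem apply_eq_of_offGreen_eq (h : offGreen lam q f = offGreen lam q g) {c : Fin n}
    (hc : ¬ Green lam q f (f c) c) : f c = g c :=
  (offGreen_eq_some_iff.1 (congrFun h c ▸ offGreen_eq_some_iff.2 ⟨hc, rfl⟩)).2.symm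

theorem green_eq_of_offGreen_eq [NeZero b] (h : offGreen lam q f = offGreen lam q g) :
    Green lam q f = Green lam q g :=
  funext₂ fun _ _ => propext ⟨Green.of_agree fun _ => apply_eq_of_offGreen_eq h,
    Green.of_agree fun _ => apply_eq_of_offGreen_eq h.symm⟩

theorem apply_eq_of_offGreen_eq_of_not_mem (h : offGreen lam q f = offGreen lam q f₀) {c : Fin n}
    (hc : c ∉ greenCols lam q f₀) : f c = f₀ c :=
  (apply_eq_of_offGreen_eq h.symm (by simpa [greenCols] using hc)).symm

theorem green_of_offGreen_eq_of_mem [NeZero b] (h : offGreen lam q f = offGreen lam q f₀)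
    {c : Fin n} (hc : c ∈ greenCols lam q f₀) : Green lam q f₀ (f c) c := by
  rw [← green_eq_of_offGreen_eq h, ← offGreen_eq_none_iff, congrFun h c, offGreen_eq_none_iff]
  simpa [greenCols] using hc

theorem inShape_and_offGreen_eq [NeZero b] (hlam : IsFerrers lam) (hf₀ : InShape lam f₀)
    (hout : ∀ c ∉ greenCols lam q f₀, f c = f₀ c)
    (hin : ∀ c ∈ greenCols lam q f₀, Green lam q f₀ (f c) c) :
    InShape lam f ∧ offGreen lam q f = offGreen lam q f₀ := by
  simp only [greenCols, mem_filter, mem_univ, true_and] at hout hin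
  have hle : ∀ {i j}, Green lam q f₀ i j → Green lam q f i j :=
    Green.of_agree fun c hc => (hout c hc).symm
  have hG : Green lam q f = Green lam q f₀ := funext₂ fun i j =>
    propext ⟨Green.of_agree fun c hc => hout c fun hD => hc (hle (hin c hD)), hle⟩
  refine ⟨fun c => ?_, funext fun c => ?_⟩ <;> by_cases hD : Green lam q f₀ (f₀ c) c
  · exact (hin c hD).cell hlam
  · exact hout c hD ▸ hf₀ c
  · rw [offGreen_eq_none_iff.2 (hG ▸ hin c hD), offGreen_eq_none_iff.2 hD]
  · simp only [offGreen, hG, hout c hD]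

noncomputable def derivedShape (lam : List ℕ) (q : Fin b → ℕ) (f₀ : Fin n → ℕ) : List ℕ :=
  restrictShape (Green lam q f₀) (greenCols lam q f₀) lam.length

theorem isFerrers_derivedShape [NeZero b] : IsFerrers (derivedShape lam q f₀) :=
  isFerrers_restrictShape (fun _ _ _ _ h => h.mono) fun _ _ h => h.lt_length

theorem getD_zero_derivedShape [NeZero b] :
    (derivedShape lam q f₀).getD 0 0 = #(greenCols lam q f₀) :=
  getD_zero_restrictShape (fun _ _ _ _ h => h.mono) (fun _ _ h => h.lt_length) fun _ hc =>
    (mem_filter.1 hc).2.mono (Nat.zero_le _) le_rfl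

noncomputable def derivedCols (lam : List ℕ) (q : Fin b → ℕ) [NeZero b] (f₀ : Fin n → ℕ) :
    Fin ((derivedShape lam q f₀).getD 0 0) ↪o Fin n :=
  (greenCols lam q f₀).orderEmbOfFin getD_zero_derivedShape.symm

theorem cell_derivedShape_iff [NeZero b] (r : ℕ) (i : Fin ((derivedShape lam q f₀).getD 0 0)) :
    Cell (derivedShape lam q f₀) r i ↔ Green lam q f₀ r (derivedCols lam q f₀ i) :=
  cell_restrictShape_iff (fun _ _ _ _ h => h.mono) (fun _ _ h => h.lt_length) _ r i

theorem range_derivedCols [NeZero b] :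
    Set.range (derivedCols lam q f₀) = greenCols lam q f₀ :=
  range_orderEmbOfFin _ _

section Extension

variable [NeZero b]

theorem inShape_comp_derivedCols (h : offGreen lam q f = offGreen lam q f₀) :
    InShape (derivedShape lam q f₀) (f ∘ derivedCols lam q f₀) := fun i =>
  (cell_derivedShape_iff _ i).2 <| green_of_offGreen_eq_of_mem h (orderEmbOfFin_mem _ _ i)

theorem extend_comp_derivedCols (h : offGreen lam q f = offGreen lam q f₀) :
    Function.extend (derivedCols lam q f₀) (f ∘ derivedCols lam q f₀) f₀ = f := by
  funext c
  by_cases hc : c ∈ Set.range (derivedCols lam q f₀)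
  · obtain ⟨i, rfl⟩ := hc
    exact (derivedCols lam q f₀).injective.extend_apply _ _ i
  · rw [Function.extend_apply' _ _ _ hc, apply_eq_of_offGreen_eq_of_not_mem h]
    rwa [← mem_coe, ← range_derivedCols]

theorem inShape_and_offGreen_eq_extend (hlam : IsFerrers lam) (hf₀ : InShape lam f₀)
    {g : Fin ((derivedShape lam q f₀).getD 0 0) → ℕ} (hg : InShape (derivedShape lam q f₀) g) :
    InShape lam (Function.extend (derivedCols lam q f₀) g f₀) ∧
      offGreen lam q (Function.extend (derivedCols lam q f₀) g f₀) = offGreen lam q f₀ := by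
  refine inShape_and_offGreen_eq hlam hf₀ (fun c hc => ?_) fun c hc => ?_
  · rw [← mem_coe, ← range_derivedCols] at hc
    exact Function.extend_apply' _ _ _ hc
  · rw [← mem_coe, ← range_derivedCols] at hc
    obtain ⟨i, rfl⟩ := hc
    rw [(derivedCols lam q f₀).injective.extend_apply]
    exact (cell_derivedShape_iff _ i).1 (hg i)

end Extension

section OplusFiber

variable {lam x β : List ℕ} {m : ℕ} (hlam : IsFerrers lam) (hx : ∀ l ∈ x, l ≤ m)
  (hβ : ∀ l ∈ β, 0 < l) [NeZero x.length] [NeZero β.length]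
include hlam hx hβ

theorem fContains_oplus_iff_derivedShape (h : offGreen lam β.get f = offGreen lam β.get f₀) :
    FContains lam f (oplus m x β) ↔
      FContains (derivedShape lam β.get f₀) (f ∘ derivedCols lam β.get f₀) x := by
  rw [fContains_oplus_iff hlam hx hβ, green_eq_of_offGreen_eq h, fContains_iff,
    exists_occurs_comp_iff _ cell_derivedShape_iff]
  intro c hc j
  rw [range_derivedCols, mem_coe]
  by_contra hD
  exact hD (mem_filter.2 ⟨mem_univ _, apply_eq_of_offGreen_eq_of_not_mem h hD ▸ hc.2.2 j j⟩)

noncomputable def fiberEquiv (hf₀ : InShape lam f₀) :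
    {a : {f : Fin n → ℕ // InShape lam f ∧ ¬ FContains lam f (oplus m x β)} //
        offGreen lam β.get a.1 = offGreen lam β.get f₀} ≃
      {g : Fin ((derivedShape lam β.get f₀).getD 0 0) → ℕ //
        InShape (derivedShape lam β.get f₀) g ∧ ¬ FContains (derivedShape lam β.get f₀) g x} where
  toFun a := ⟨a.1.1 ∘ derivedCols lam β.get f₀, inShape_comp_derivedCols a.2,
    (fContains_oplus_iff_derivedShape hlam hx hβ a.2).not.1 a.1.2.2⟩
  invFun g :=
    have hext := inShape_and_offGreen_eq_extend hlam hf₀ g.2.1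
    ⟨⟨Function.extend (derivedCols lam β.get f₀) g.1 f₀, hext.1, by
      rw [fContains_oplus_iff_derivedShape hlam hx hβ hext.2,
        Function.extend_comp (derivedCols lam β.get f₀).injective]
      exact g.2.2⟩, hext.2⟩
  left_inv a := Subtype.ext <| Subtype.ext <| extend_comp_derivedCols a.2
  right_inv g := Subtype.ext <| Function.extend_comp (derivedCols lam β.get f₀).injective _ _

end OplusFiber

end Fiber

end ShapeWilf

open ShapeWilf

/-- If `|W_λ(231)| ≤ |W_λ(312)|` for every Ferrers shape λ, then
`|W_λ(231 ⊕ β)| ≤ |W_λ(312 ⊕ β)|` for every pattern β and every Ferrers shape λ. -/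
theorem stmt_16
    (h : ∀ lam : List ℕ, IsFerrers lam →
      TotalCount lam [[2, 3, 1]] ≤ TotalCount lam [[3, 1, 2]]) :
    ∀ β : List ℕ, (∀ l ∈ β, 0 < l) → ∀ lam : List ℕ, IsFerrers lam →
      TotalCount lam [oplus 3 [2, 3, 1] β] ≤ TotalCount lam [oplus 3 [3, 1, 2] β] := by
  intro β hβ lam hlam
  rcases eq_or_ne β [] with rfl | hβne
  · simpa [oplus] using h lam hlam
  have : NeZero β.length := ⟨by simpa using hβne⟩
  rw [totalCount_singleton, totalCount_singleton]
  refine Nat.card_le_card_of_card_fiber_le (fun a => offGreen lam β.get a.1)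
    (fun a => offGreen lam β.get a.1) fun ⟨f₀, hf₀, _⟩ => ?_
  rw [Nat.card_congr (fiberEquiv hlam (by simp) hβ hf₀),
    Nat.card_congr (fiberEquiv hlam (by simp) hβ hf₀), ← totalCount_singleton,
    ← totalCount_singleton]
  exact h _ isFerrers_derivedShape
end
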